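/- For every integer n ≥ 4 with n ≡ 1 (mod 3), the set of pseudo-Frobenius numbers of S(n) = ⟨f_n², f_{n+1}², f_{n+2}²⟩ is exactly the two-element set { (f_{n−1}/2 − 1)·f_{n+1}² + (f_n − 1)·f_{n+2}² − f_n² , (f_{n+2}/2 − 1)·f_{n+1}² + ((f_{n−2} + f_n)/2 − 1)·f_{n+2}² − f_n² }. -/

import Mathlib

/-!
Write `g = f_n` and `f_{n-1} = 2p` (even because `3 ∣ n - 1`), so that `f_{n+1} = g + 2p`,
`f_{n+2} = 2g + 2p` and `g` is coprime to `2p`. The Apéry set of `S(n)` with respect to `g²` is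
`{m (g+2p)² + l (2g+2p)² : (m, l) ∈ R}` for the L-shaped region
`R = [0,p) × [0,g) ∪ [0,g+p) × [0,g-p)` of `g²` points. Indeed, the relations
`g (2g+2p)² = (3g+4p) g² + g (g+2p)²`, `(g+p) (g+2p)² = (g+p) g² + p (2g+2p)²` and
`p (g+2p)² + (g-p) (2g+2p)² = (4g+5p) g²` move any pair of coefficients into `R` at the cost of
multiples of `g²`, while expanding `(g+2p)² ≡ 4p² + 4pg` and `(2g+2p)² ≡ 4p² + 8pg` modulo `g²`
shows that distinct points of `R` give incongruent elements. The pseudo-Frobenius numbers are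
`w - g²` for the maximal elements `w` of the Apéry set, which come from the two outer corners
`(p-1, g-1)` and `(g+p-1, g-p-1)` of `R`.
-/

open Nat

/-- Membership of an integer in the numerical semigroup
`S(n) = ⟨fib n ^ 2, fib (n+1) ^ 2, fib (n+2) ^ 2⟩`. -/
def SZ (n : ℕ) : Set ℤ :=
  {x | ∃ a b c : ℕ, x = (a : ℤ) * (fib n : ℤ) ^ 2 + (b : ℤ) * (fib (n + 1) : ℤ) ^ 2 +
      (c : ℤ) * (fib (n + 2) : ℤ) ^ 2}

/-- `x` is a pseudo-Frobenius number of `S(n)`. -/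
def IsPF (n : ℕ) (x : ℤ) : Prop :=
  x ∉ SZ n ∧ ∀ s ∈ SZ n, s ≠ 0 → x + s ∈ SZ n

def gen3 (A B C : ℤ) : Set ℤ :=
  {x | ∃ a b c : ℕ, x = a * A + b * B + c * C}

def IsPseudoFrobenius (S : Set ℤ) (x : ℤ) : Prop :=
  x ∉ S ∧ ∀ s ∈ S, s ≠ 0 → x + s ∈ S

section gen3

variable {A B C x y : ℤ}

theorem mem_gen3_iff :
    x ∈ gen3 A B C ↔ ∃ a b c : ℤ, 0 ≤ a ∧ 0 ≤ b ∧ 0 ≤ c ∧ x = a * A + b * B + c * C := by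
  constructor
  · rintro ⟨a, b, c, rfl⟩
    exact ⟨a, b, c, by positivity, by positivity, by positivity, rfl⟩
  · rintro ⟨a, b, c, ha, hb, hc, rfl⟩
    exact ⟨a.toNat, b.toNat, c.toNat, by simp [ha, hb, hc]⟩

theorem add_mem_gen3 (hx : x ∈ gen3 A B C) (hy : y ∈ gen3 A B C) : x + y ∈ gen3 A B C := by
  obtain ⟨a, b, c, rfl⟩ := hx
  obtain ⟨a', b', c', rfl⟩ := hy
  exact ⟨a + a', b + b', c + c', by push_cast; ring⟩

theorem isPseudoFrobenius_gen3_iff (hA : A ≠ 0) (hB : B ≠ 0) (hC : C ≠ 0) :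
    IsPseudoFrobenius (gen3 A B C) x ↔
      x ∉ gen3 A B C ∧ x + A ∈ gen3 A B C ∧ x + B ∈ gen3 A B C ∧ x + C ∈ gen3 A B C := by
  refine and_congr_right fun _ => ⟨fun h => ⟨h A ⟨1, 0, 0, by simp⟩ hA,
    h B ⟨0, 1, 0, by simp⟩ hB, h C ⟨0, 0, 1, by simp⟩ hC⟩, ?_⟩
  rintro ⟨hxA, hxB, hxC⟩ s ⟨a, b, c, rfl⟩ hs
  obtain _ | a := a
  · obtain _ | b := b
    · obtain _ | c := c
      · simp at hs
      · convert add_mem_gen3 hxC ⟨0, 0, c, rfl⟩ using 1; push_cast; ring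
    · convert add_mem_gen3 hxB ⟨0, b, c, rfl⟩ using 1; push_cast; ring
  · convert add_mem_gen3 hxA ⟨a, b, c, rfl⟩ using 1; push_cast; ring

end gen3

theorem eq_neg_one_or_zero_or_one_of_mul_mem_Ioo {g t : ℤ} (hg : 0 < g)
    (h : g * t ∈ Set.Ioo (-(2 * g)) (2 * g)) : t = -1 ∨ t = 0 ∨ t = 1 := by
  obtain ⟨h₁, h₂⟩ := h
  have : -2 < t := by nlinarith
  have : t < 2 := by nlinarith
  omega

def sqSemigroup (g p : ℤ) : Set ℤ :=
  gen3 (g ^ 2) ((g + 2 * p) ^ 2) ((2 * g + 2 * p) ^ 2)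

def IsAperyIndex (g p m l : ℤ) : Prop :=
  0 ≤ m ∧ 0 ≤ l ∧ (m < p ∧ l < g ∨ m < g + p ∧ l < g - p)

section sqSemigroup

variable {g p : ℤ}

theorem exists_aperyIndex_repr (hp : 0 < p) (hpg : 2 * p < g) (m l : ℤ) (hm : 0 ≤ m)
    (hl : 0 ≤ l) : ∃ k m' l', 0 ≤ k ∧ IsAperyIndex g p m' l' ∧
      m * (g + 2 * p) ^ 2 + l * (2 * g + 2 * p) ^ 2 =
        k * g ^ 2 + m' * (g + 2 * p) ^ 2 + l' * (2 * g + 2 * p) ^ 2 := by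
  by_cases hml : IsAperyIndex g p m l
  · exact ⟨0, m, l, le_rfl, hml, by ring⟩
  obtain ⟨k, m₁, l₁, hk, hm₁, hl₁, hlt, heq⟩ : ∃ k m₁ l₁, 0 ≤ k ∧ 0 ≤ m₁ ∧ 0 ≤ l₁ ∧
      m₁ + 2 * l₁ < m + 2 * l ∧ m * (g + 2 * p) ^ 2 + l * (2 * g + 2 * p) ^ 2 =
        k * g ^ 2 + m₁ * (g + 2 * p) ^ 2 + l₁ * (2 * g + 2 * p) ^ 2 := by
    unfold IsAperyIndex at hml
    by_cases hlg : g ≤ l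
    · exact ⟨3 * g + 4 * p, m + g, l - g, by omega, by omega, by omega, by omega, by ring⟩
    by_cases hmg : g + p ≤ m
    · exact ⟨g + p, m - (g + p), l + p, by omega, by omega, by omega, by omega, by ring⟩
    · exact ⟨4 * g + 5 * p, m - p, l - (g - p), by omega, by omega, by omega, by omega, by ring⟩
  obtain ⟨k', m', l', hk', hml', heq'⟩ := exists_aperyIndex_repr hp hpg m₁ l₁ hm₁ hl₁
  exact ⟨k + k', m', l', by omega, hml', by linear_combination heq + heq'⟩
termination_by (m + 2 * l).toNat
decreasing_by omega

theorem exists_dvd_of_sq_dvd (hg : g ≠ 0) (hco : IsCoprime g (2 * p)) {u v : ℤ}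
    (h : g ^ 2 ∣ u * (g + 2 * p) ^ 2 + v * (2 * g + 2 * p) ^ 2) :
    ∃ t, u + v = g * t ∧ g ∣ v + p * t := by
  have hco₄ : IsCoprime g (2 * (2 * p)) := hco.of_mul_right_left.mul_right hco
  obtain ⟨t, ht⟩ : g ∣ u + v := by
    refine (hco.pow_right (n := 2)).dvd_of_dvd_mul_left ?_
    have e : u * (g + 2 * p) ^ 2 + v * (2 * g + 2 * p) ^ 2 =
        g * (g * (u + 4 * v) + 4 * p * (u + 2 * v)) + (2 * p) ^ 2 * (u + v) := by ring
    rw [e] at h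
    exact (dvd_add_right (dvd_mul_right _ _)).mp ((dvd_pow_self g two_ne_zero).trans h)
  refine ⟨t, ht, ?_⟩
  have e : u * (g + 2 * p) ^ 2 + v * (2 * g + 2 * p) ^ 2 =
      g ^ 2 * (u + 4 * v) + g * (2 * (2 * p) * (v + p * t + g * t)) := by
    linear_combination (4 * p ^ 2 + 4 * p * g) * ht
  rw [e, dvd_add_right (dvd_mul_right _ _), pow_two, mul_dvd_mul_iff_left hg] at h
  simpa using (dvd_add_left (dvd_mul_right g t)).mp (hco₄.dvd_of_dvd_mul_left h)

theorem aperyIndex_eq_of_sq_dvd (hp : 0 < p) (hpg : 2 * p < g) (hco : IsCoprime g (2 * p))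
    {m l m' l' : ℤ} (h : IsAperyIndex g p m l) (h' : IsAperyIndex g p m' l')
    (hdvd : g ^ 2 ∣ (m * (g + 2 * p) ^ 2 + l * (2 * g + 2 * p) ^ 2) -
      (m' * (g + 2 * p) ^ 2 + l' * (2 * g + 2 * p) ^ 2)) :
    m = m' ∧ l = l' := by
  obtain ⟨t, ht, j, hj⟩ := exists_dvd_of_sq_dvd (by omega) hco (u := m - m') (v := l - l')
    (by convert hdvd using 1; ring)
  unfold IsAperyIndex at h h'
  have hg : 0 < g := by omega
  have hsum : m + l < 2 * g ∧ m' + l' < 2 * g := by omega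
  have hl : l < g ∧ l' < g := by omega
  -- `t, j ∈ {-1, 0, 1}`, and the region rules out every case except `t = j = 0`.
  rcases eq_neg_one_or_zero_or_one_of_mul_mem_Ioo hg (t := t) ⟨by linarith, by linarith⟩ with
    rfl | rfl | rfl <;>
  rcases eq_neg_one_or_zero_or_one_of_mul_mem_Ioo hg (t := j) ⟨by linarith, by linarith⟩ with
    rfl | rfl | rfl <;>
  simp only [mul_one, mul_zero, mul_neg] at ht hj <;> omega

theorem exists_aperyIndex_of_mem (hp : 0 < p) (hpg : 2 * p < g) {x : ℤ}
    (hx : x ∈ sqSemigroup g p) : ∃ k m l, 0 ≤ k ∧ IsAperyIndex g p m l ∧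
      x = k * g ^ 2 + m * (g + 2 * p) ^ 2 + l * (2 * g + 2 * p) ^ 2 := by
  obtain ⟨a, b, c, ha, hb, hc, rfl⟩ := mem_gen3_iff.mp hx
  obtain ⟨k, m, l, hk, hml, heq⟩ := exists_aperyIndex_repr hp hpg b c hb hc
  exact ⟨a + k, m, l, by omega, hml, by linear_combination heq⟩

theorem sub_sq_notMem_sqSemigroup (hp : 0 < p) (hpg : 2 * p < g) (hco : IsCoprime g (2 * p))
    {m l : ℤ} (hml : IsAperyIndex g p m l) :
    m * (g + 2 * p) ^ 2 + l * (2 * g + 2 * p) ^ 2 - g ^ 2 ∉ sqSemigroup g p := by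
  intro hx
  obtain ⟨k, m', l', hk, hml', heq⟩ := exists_aperyIndex_of_mem hp hpg hx
  obtain ⟨rfl, rfl⟩ := aperyIndex_eq_of_sq_dvd hp hpg hco hml hml'
    ⟨k + 1, by linear_combination heq⟩
  nlinarith [pow_pos (show 0 < g by omega) 2]

theorem exists_aperyIndex_of_add_sq_mem (hp : 0 < p) (hpg : 2 * p < g) {x : ℤ}
    (hx : x ∉ sqSemigroup g p) (hxA : x + g ^ 2 ∈ sqSemigroup g p) :
    ∃ m l, IsAperyIndex g p m l ∧ x = m * (g + 2 * p) ^ 2 + l * (2 * g + 2 * p) ^ 2 - g ^ 2 := by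
  obtain ⟨k, m, l, hk, hml, heq⟩ := exists_aperyIndex_of_mem hp hpg hxA
  obtain rfl : k = 0 := by
    refine le_antisymm (not_lt.mp fun hk₀ => hx ?_) hk
    exact mem_gen3_iff.mpr ⟨k - 1, m, l, by omega, hml.1, hml.2.1, by linear_combination heq⟩
  exact ⟨m, l, hml, by linear_combination heq⟩

theorem setOf_isPseudoFrobenius_sqSemigroup (hp : 0 < p) (hpg : 2 * p < g)
    (hco : IsCoprime g (2 * p)) :
    {x | IsPseudoFrobenius (sqSemigroup g p) x} =
      {(p - 1) * (g + 2 * p) ^ 2 + (g - 1) * (2 * g + 2 * p) ^ 2 - g ^ 2,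
        (g + p - 1) * (g + 2 * p) ^ 2 + (g - p - 1) * (2 * g + 2 * p) ^ 2 - g ^ 2} := by
  have hg : 0 < g := by omega
  ext x
  rw [Set.mem_ofPred_eq, sqSemigroup, isPseudoFrobenius_gen3_iff (by positivity) (by positivity)
    (by positivity), ← sqSemigroup]
  constructor
  · rintro ⟨hx, hxA, hxB, hxC⟩
    obtain ⟨m, l, hml, rfl⟩ := exists_aperyIndex_of_add_sq_mem hp hpg hx hxA
    have hB : ¬IsAperyIndex g p (m + 1) l := fun h =>
      sub_sq_notMem_sqSemigroup hp hpg hco h (by convert hxB using 1; ring)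
    have hC : ¬IsAperyIndex g p m (l + 1) := fun h =>
      sub_sq_notMem_sqSemigroup hp hpg hco h (by convert hxC using 1; ring)
    unfold IsAperyIndex at hml hB hC
    obtain ⟨rfl, rfl⟩ | ⟨rfl, rfl⟩ : m = p - 1 ∧ l = g - 1 ∨ m = g + p - 1 ∧ l = g - p - 1 := by
      omega
    exacts [Or.inl rfl, Or.inr rfl]
  · rintro (rfl | rfl)
    · refine ⟨sub_sq_notMem_sqSemigroup hp hpg hco (by unfold IsAperyIndex; omega), ?_, ?_, ?_⟩
      · exact mem_gen3_iff.mpr ⟨0, p - 1, g - 1, by omega, by omega, by omega, by ring⟩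
      · exact mem_gen3_iff.mpr ⟨4 * g + 5 * p - 1, 0, p - 1, by omega, by omega, by omega, by ring⟩
      · exact mem_gen3_iff.mpr ⟨3 * g + 4 * p - 1, g + p - 1, 0, by omega, by omega, by omega,
          by ring⟩
    · refine ⟨sub_sq_notMem_sqSemigroup hp hpg hco (by unfold IsAperyIndex; omega), ?_, ?_, ?_⟩
      · exact mem_gen3_iff.mpr ⟨0, g + p - 1, g - p - 1, by omega, by omega, by omega, by ring⟩
      · exact mem_gen3_iff.mpr ⟨g + p - 1, 0, g - 1, by omega, by omega, by omega, by ring⟩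
      · exact mem_gen3_iff.mpr ⟨4 * g + 5 * p - 1, g - 1, 0, by omega, by omega, by omega,
          by ring⟩

end sqSemigroup

theorem pseudoFrobenius_Sn_of_mod_three_eq_one (n : ℕ) (hn : 4 ≤ n) (h3 : n % 3 = 1) :
    {x : ℤ | IsPF n x} =
      {((fib (n - 1) : ℤ) / 2 - 1) * (fib (n + 1) : ℤ) ^ 2 +
          ((fib n : ℤ) - 1) * (fib (n + 2) : ℤ) ^ 2 - (fib n : ℤ) ^ 2,
        ((fib (n + 2) : ℤ) / 2 - 1) * (fib (n + 1) : ℤ) ^ 2 +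
          (((fib (n - 2) : ℤ) + (fib n : ℤ)) / 2 - 1) * (fib (n + 2) : ℤ) ^ 2 -
          (fib n : ℤ) ^ 2} := by
  obtain ⟨k, rfl⟩ : ∃ k, n = k + 2 := ⟨n - 2, by omega⟩
  obtain ⟨p, hp⟩ : 2 ∣ fib (k + 1) := fib_dvd 3 (k + 1) (by omega)
  have hpos : 0 < fib (k + 1) := fib_pos.mpr (by omega)
  have hlt : fib (k + 1) < fib (k + 2) := fib_lt_fib_succ (by omega)
  have hco : IsCoprime (fib (k + 2) : ℤ) (2 * p) := by
    exact_mod_cast Nat.isCoprime_iff_coprime.mpr (hp ▸ (fib_coprime_fib_succ (k + 1)).symm)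
  have hfib_add_one : (fib (k + 2 + 1) : ℤ) = fib (k + 2) + 2 * p := by
    have : fib (k + 2 + 1) = fib (k + 1) + fib (k + 2) := fib_add_two
    omega
  have hfib_add_two : (fib (k + 2 + 2) : ℤ) = 2 * fib (k + 2) + 2 * p := by
    have : fib (k + 2 + 2) = fib (k + 2) + fib (k + 2 + 1) := fib_add_two
    omega
  have hfib_sub_two : (fib (k + 2 - 2) : ℤ) = fib (k + 2) - 2 * p := by
    have : fib (k + 2) = fib (k + 2 - 2) + fib (k + 1) := fib_add_two
    omega
  have hS : SZ (k + 2) = sqSemigroup (fib (k + 2)) p := by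
    rw [sqSemigroup, ← hfib_add_one, ← hfib_add_two]; rfl
  calc {x : ℤ | IsPF (k + 2) x} = {x | IsPseudoFrobenius (sqSemigroup (fib (k + 2)) p) x} := by
        rw [← hS]; rfl
    _ = _ := setOf_isPseudoFrobenius_sqSemigroup (by omega) (by omega) hco
    _ = _ := by
      rw [hfib_sub_two, hfib_add_one, hfib_add_two, show ((fib (k + 2 - 1) : ℤ)) / 2 = p by simp [hp],
        show (2 * (fib (k + 2) : ℤ) + 2 * p) / 2 = fib (k + 2) + p by omega,
        show ((fib (k + 2) : ℤ) - 2 * p + fib (k + 2)) / 2 = fib (k + 2) - p by omega]
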